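/- arXiv:2512.12014 — 4 statements merged into one kernel-verified Lean document; each statement's English description precedes it below -/
import Mathlib

section
/- Let X be a real inner product space, let a₀, a₁ ∈ X with a₀ ≠ a₁ and a := a₁ − a₀, let F ∈ X, and let h ∈ ℝ satisfy 0 ≤ h < ‖a‖². Set θ* := ⟨F − a₀, a⟩/‖a‖², R := h/(2‖a‖²), and let θ̃ ∈ [0,1] be the unique minimizer over [0,1] of θ ↦ ‖F − a_θ‖² + θ(1−θ)h, where a_θ := (1−θ)a₀ + θa₁. Then: (i) θ̃ = 0 if and only if θ* ≤ R; (ii) θ̃ = 1 if and only if θ* ≥ 1 − R; (iii) θ̃ ∈ (0,1) if and only if |⟨F − a_{1/2}, a⟩| < (1/2 − R)·‖a‖². -/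
open RealInnerProductSpace

/-- A strictly convex quadratic minimized over [0,1] at `t`: `t = 0` iff slope at 0 is ≥ 0. -/
lemma quad_min_zero (b q : ℝ) (hq : 0 < q) (t : ℝ) (ht : t ∈ Set.Icc (0:ℝ) 1)
    (hm : ∀ θ ∈ Set.Icc (0:ℝ) 1, b*t + q*t^2 ≤ b*θ + q*θ^2) : t = 0 ↔ 0 ≤ b := by
  obtain ⟨ht0, ht1⟩ := ht
  constructor
  · intro h0
    subst h0
    by_contra hb
    push_neg at hb
    set θ := min 1 (-b/(2*q)) with hθ
    have hpos : 0 < -b/(2*q) := div_pos (by linarith) (by linarith)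
    have hθ0 : 0 < θ := lt_min one_pos hpos
    have hθ1 : θ ≤ 1 := min_le_left _ _
    have hθ2 : θ ≤ -b/(2*q) := min_le_right _ _
    rw [le_div_iff₀ (by linarith : (0:ℝ) < 2*q)] at hθ2
    have := hm θ ⟨le_of_lt hθ0, hθ1⟩
    nlinarith
  · intro hb
    have := hm 0 ⟨le_refl _, by norm_num⟩
    rcases eq_or_lt_of_le ht0 with h0 | h0
    · exact h0.symm
    · exfalso
      nlinarith [mul_nonneg hb h0.le, mul_pos hq (mul_pos h0 h0)]

/-- Geometry of the optimal volume fraction: the boundary data space is partitioned into two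
half-spaces (pure phases) and a separating slab (phase mixing). -/
theorem statement4 {X : Type*} [NormedAddCommGroup X] [InnerProductSpace ℝ X]
    (a₀ a₁ F : X) (hwells : a₀ ≠ a₁) (h : ℝ)
    (hh0 : 0 ≤ h) (hh1 : h < ‖a₁ - a₀‖ ^ 2)
    (θt : ℝ) (hθt : θt ∈ Set.Icc (0 : ℝ) 1)
    (hmin : ∀ θ' ∈ Set.Icc (0 : ℝ) 1,
      ‖F - ((1 - θt) • a₀ + θt • a₁)‖ ^ 2 + θt * (1 - θt) * h ≤
        ‖F - ((1 - θ') • a₀ + θ' • a₁)‖ ^ 2 + θ' * (1 - θ') * h) :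
    (θt = 0 ↔ ⟪F - a₀, a₁ - a₀⟫ / ‖a₁ - a₀‖ ^ 2 ≤ h / (2 * ‖a₁ - a₀‖ ^ 2)) ∧
    (θt = 1 ↔ 1 - h / (2 * ‖a₁ - a₀‖ ^ 2) ≤ ⟪F - a₀, a₁ - a₀⟫ / ‖a₁ - a₀‖ ^ 2) ∧
    (θt ∈ Set.Ioo (0 : ℝ) 1 ↔
      |⟪F - ((1 - (1/2 : ℝ)) • a₀ + (1/2 : ℝ) • a₁), a₁ - a₀⟫| <
        (1/2 - h / (2 * ‖a₁ - a₀‖ ^ 2)) * ‖a₁ - a₀‖ ^ 2) := by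
  set A : ℝ := ‖a₁ - a₀‖ ^ 2 with hA
  set P : ℝ := ⟪F - a₀, a₁ - a₀⟫ with hP
  have hn0 : 0 < ‖a₁ - a₀‖ := norm_pos_iff.mpr (sub_ne_zero.mpr (Ne.symm hwells))
  have hA0 : 0 < A := pow_pos hn0 2
  -- Expansion of the norm term
  have key : ∀ θ : ℝ, ‖F - ((1 - θ) • a₀ + θ • a₁)‖ ^ 2
      = ‖F - a₀‖ ^ 2 - 2*θ*P + θ^2*A := by
    intro θ
    have h1 : F - ((1 - θ) • a₀ + θ • a₁) = (F - a₀) - θ • (a₁ - a₀) := by module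
    rw [h1, @norm_sub_sq_real, real_inner_smul_right, norm_smul]
    simp [hP, hA, mul_pow]
    ring
  set b : ℝ := h - 2*P with hb
  set q : ℝ := A - h with hq
  have hq0 : 0 < q := by simp only [hq]; linarith
  have hm : ∀ θ ∈ Set.Icc (0:ℝ) 1, b*θt + q*θt^2 ≤ b*θ + q*θ^2 := by
    intro θ hθ
    have := hmin θ hθ
    rw [key θ, key θt] at this
    simp only [hb, hq]
    nlinarith [this]
  have e0 : θt = 0 ↔ 0 ≤ b := quad_min_zero b q hq0 θt hθt hm
  have e1 : θt = 1 ↔ b + 2*q ≤ 0 := by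
    have hm' : ∀ s ∈ Set.Icc (0:ℝ) 1,
        (-(b+2*q))*(1-θt) + q*(1-θt)^2 ≤ (-(b+2*q))*s + q*s^2 := by
      intro s hs
      have hs' : (1 - s) ∈ Set.Icc (0:ℝ) 1 := ⟨by linarith [hs.2], by linarith [hs.1]⟩
      have := hm (1-s) hs'
      nlinarith [this]
    have ht' : (1 - θt) ∈ Set.Icc (0:ℝ) 1 := ⟨by linarith [hθt.2], by linarith [hθt.1]⟩
    have := quad_min_zero (-(b+2*q)) q hq0 (1-θt) ht' hm'
    constructor
    · intro h1; have := this.mp (by linarith); linarith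
    · intro h1; linarith [this.mpr (by linarith)]
  have div1 : (P / A ≤ h / (2*A)) ↔ 0 ≤ b := by
    rw [div_le_div_iff₀ hA0 (by linarith : (0:ℝ) < 2*A)]
    constructor <;> intro <;> nlinarith [hb]
  have div2 : (1 - h / (2*A) ≤ P / A) ↔ b + 2*q ≤ 0 := by
    have h2 : 1 - h/(2*A) = (2*A - h)/(2*A) := by field_simp
    rw [h2, div_le_div_iff₀ (by linarith : (0:ℝ) < 2*A) hA0]
    constructor <;> intro <;> nlinarith [hb, hq]
  have inner_mid : ⟪F - ((1 - (1/2:ℝ)) • a₀ + (1/2:ℝ) • a₁), a₁ - a₀⟫ = P - A/2 := by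
    have h1 : F - ((1 - (1/2:ℝ)) • a₀ + (1/2:ℝ) • a₁)
        = (F - a₀) - (1/2:ℝ) • (a₁ - a₀) := by module
    rw [h1, inner_sub_left, real_inner_smul_left, real_inner_self_eq_norm_sq]
    simp only [hP, hA]
    ring
  have div3 : (1/2 - h/(2*A)) * A = q/2 := by
    simp only [hq]
    field_simp
  refine ⟨e0.trans div1.symm, e1.trans div2.symm, ?_⟩
  rw [inner_mid, div3]
  constructor
  · rintro ⟨h1, h2⟩
    have hb0 : b < 0 := by
      by_contra hx; push_neg at hx; exact h1.ne' (e0.mpr hx)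
    have hb1 : 0 < b + 2*q := by
      by_contra hx; push_neg at hx; exact h2.ne (e1.mpr hx)
    rw [abs_lt]
    constructor <;> [skip; skip] <;> simp only [hb, hq] at hb0 hb1 ⊢ <;> linarith
  · intro habs
    rw [abs_lt] at habs
    have hb0 : b < 0 := by simp only [hb]; simp only [hq] at habs; linarith [habs.1]
    have hb1 : 0 < b + 2*q := by simp only [hb, hq]; simp only [hq] at habs; linarith [habs.2]
    constructor
    · rcases eq_or_lt_of_le hθt.1 with h0 | h0
      · exact absurd (e0.mp h0.symm) (not_le.mpr hb0)
      · exact h0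
    · rcases eq_or_lt_of_le hθt.2 with h0 | h0
      · exact absurd (e1.mp h0) (not_le.mpr hb1)
      · exact h0
end

section
/- Let d ≥ 1, let ξ ∈ ℝ^d be a unit vector, and let V_cc(ξ) := {b⊙ξ : b ∈ ℝ^d}, a linear subspace of the space of symmetric d×d matrices. Then for every symmetric a ∈ ℝ^{d×d}, the orthogonal projection of a onto V_cc(ξ) with respect to the Frobenius inner product equals (2aξ − ⟨ξ, aξ⟩ξ) ⊙ ξ, and its squared Frobenius norm equals 2‖aξ‖² − ⟨aξ, ξ⟩². -/
/-- Squared Frobenius norm of a matrix. -/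
def frob2 {d : ℕ} (M : Matrix (Fin d) (Fin d) ℝ) : ℝ := ∑ i, ∑ j, (M i j) ^ 2

/-- Frobenius inner product of matrices. -/
def frobInner {d : ℕ} (A B : Matrix (Fin d) (Fin d) ℝ) : ℝ := ∑ i, ∑ j, A i j * B i j

/-- The symmetrized tensor product `b ⊙ ξ` as a matrix. -/
noncomputable def symOuter {d : ℕ} (b ξ : Fin d → ℝ) : Matrix (Fin d) (Fin d) ℝ :=
  Matrix.of fun i j => (b i * ξ j + ξ i * b j) / 2

section aux
variable {d : ℕ}

lemma sum_mul_comm (f g : Fin d → ℝ) : (∑ i, f i * g i) = ∑ i, g i * f i :=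
  Finset.sum_congr rfl fun i _ => mul_comm _ _

lemma frobInner_symOuter (p b ξ : Fin d → ℝ) :
    frobInner (symOuter p ξ) (symOuter b ξ) =
      ((∑ i, p i * b i) * (∑ i, ξ i * ξ i)
        + (∑ i, p i * ξ i) * (∑ i, ξ i * b i)) / 2 := by
  unfold frobInner symOuter
  have h : ∀ i j : Fin d,
      (Matrix.of fun i j => (p i * ξ j + ξ i * p j) / 2) i j *
        ((Matrix.of fun i j => (b i * ξ j + ξ i * b j) / 2) i j)
        = ((p i * b i) * (ξ j * ξ j) + (p i * ξ i) * (ξ j * b j)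
           + (ξ i * b i) * (p j * ξ j) + (ξ i * ξ i) * (p j * b j)) / 4 := by
    intro i j; simp only [Matrix.of_apply]; ring
  rw [Finset.sum_congr rfl fun i _ => Finset.sum_congr rfl fun j _ => h i j]
  simp only [← Finset.sum_div, Finset.sum_add_distrib, ← Finset.mul_sum, ← Finset.sum_mul]
  rw [sum_mul_comm ξ b]
  ring

lemma frobInner_a_symOuter (a : Matrix (Fin d) (Fin d) ℝ) (ha : a.IsSymm) (b ξ : Fin d → ℝ) :
    frobInner a (symOuter b ξ) = ∑ i, b i * a.mulVec ξ i := by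
  unfold frobInner symOuter
  have h : ∀ i j : Fin d, a i j * ((Matrix.of fun i j => (b i * ξ j + ξ i * b j) / 2) i j)
      = (b i * (a i j * ξ j)) / 2 + (b j * (a i j * ξ i)) / 2 := by
    intro i j; simp only [Matrix.of_apply]; ring
  rw [Finset.sum_congr rfl fun i _ => Finset.sum_congr rfl fun j _ => h i j]
  simp only [Finset.sum_add_distrib]
  rw [Finset.sum_comm (f := fun i j => (b j * (a i j * ξ i)) / 2)]
  have h2 : ∀ j : Fin d, (∑ i, (b j * (a i j * ξ i)) / 2) = b j * a.mulVec ξ j / 2 := by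
    intro j
    rw [← Finset.sum_div]
    congr 1
    rw [← Finset.mul_sum]
    congr 1
    simp only [Matrix.mulVec, dotProduct]
    exact Finset.sum_congr rfl fun i _ => by rw [ha.apply j i]
  have h1 : ∀ i : Fin d, (∑ j, (b i * (a i j * ξ j)) / 2) = b i * a.mulVec ξ i / 2 := by
    intro i
    rw [← Finset.sum_div]
    congr 1
    rw [← Finset.mul_sum]
    rfl
  rw [Finset.sum_congr rfl fun i _ => h1 i, Finset.sum_congr rfl fun j _ => h2 j,
    ← Finset.sum_add_distrib]
  exact Finset.sum_congr rfl fun i _ => by ring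

lemma frobInner_sub_left (A B C : Matrix (Fin d) (Fin d) ℝ) :
    frobInner (A - B) C = frobInner A C - frobInner B C := by
  unfold frobInner
  simp [Matrix.sub_apply, sub_mul, Finset.sum_sub_distrib]

lemma frob2_eq_frobInner (M : Matrix (Fin d) (Fin d) ℝ) : frob2 M = frobInner M M := by
  unfold frob2 frobInner
  simp [sq]

noncomputable def symOuterMap (ξ : Fin d → ℝ) :
    (Fin d → ℝ) →ₗ[ℝ] Matrix (Fin d) (Fin d) ℝ where
  toFun b := symOuter b ξ
  map_add' b c := by
    ext i j
    simp only [symOuter, Matrix.of_apply, Pi.add_apply, Matrix.add_apply]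
    ring
  map_smul' r b := by
    ext i j
    simp only [symOuter, Matrix.of_apply, Pi.smul_apply, Matrix.smul_apply,
      smul_eq_mul, RingHom.id_apply]
    ring

end aux

/-- For a unit vector `ξ`, `V_cc(ξ) = {b ⊙ ξ}` is a linear subspace; for symmetric `a`,
the orthogonal projection of `a` onto `V_cc(ξ)` equals `(2aξ - ⟨ξ, aξ⟩ξ) ⊙ ξ`, with
squared Frobenius norm `2‖aξ‖² - ⟨aξ,ξ⟩²`. -/
theorem statement11 (d : ℕ) (hd : 1 ≤ d) (ξ : Fin d → ℝ) (hξ : ∑ i, ξ i ^ 2 = 1)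
    (a : Matrix (Fin d) (Fin d) ℝ) (ha : a.IsSymm) :
    -- `V_cc(ξ)` is a linear subspace
    (∃ V : Submodule ℝ (Matrix (Fin d) (Fin d) ℝ),
      (V : Set (Matrix (Fin d) (Fin d) ℝ)) = {M | ∃ b : Fin d → ℝ, M = symOuter b ξ}) ∧
    -- `(2aξ - ⟨ξ,aξ⟩ξ) ⊙ ξ` is the orthogonal projection of `a` onto `V_cc(ξ)`:
    -- it lies in `V_cc(ξ)` and the difference is Frobenius-orthogonal to `V_cc(ξ)`
    (∀ b : Fin d → ℝ,
      frobInner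
        (a - symOuter ((2 : ℝ) • a.mulVec ξ - (∑ i, ξ i * a.mulVec ξ i) • ξ) ξ)
        (symOuter b ξ) = 0) ∧
    -- its squared Frobenius norm is `2‖aξ‖² - ⟨aξ,ξ⟩²`
    frob2 (symOuter ((2 : ℝ) • a.mulVec ξ - (∑ i, ξ i * a.mulVec ξ i) • ξ) ξ) =
      2 * (∑ i, (a.mulVec ξ i) ^ 2) - (∑ i, a.mulVec ξ i * ξ i) ^ 2 := by
  set c : Fin d → ℝ := a.mulVec ξ with hc
  set s : ℝ := ∑ i, ξ i * c i with hs
  set p : Fin d → ℝ := (2 : ℝ) • c - s • ξ with hp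
  have hξξ : (∑ i, ξ i * ξ i) = 1 := by
    rw [← hξ]; exact Finset.sum_congr rfl fun i _ => (sq (ξ i)).symm
  have hpb : ∀ b : Fin d → ℝ,
      (∑ i, p i * b i) = 2 * (∑ i, c i * b i) - s * (∑ i, ξ i * b i) := by
    intro b
    simp only [hp, Pi.sub_apply, Pi.smul_apply, smul_eq_mul, sub_mul,
      Finset.sum_sub_distrib, Finset.mul_sum, mul_assoc]
  have hcξ : (∑ i, c i * ξ i) = s := by rw [hs, sum_mul_comm]
  have hpξ : (∑ i, p i * ξ i) = s := by rw [hpb, hcξ, hξξ]; ring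
  refine ⟨⟨LinearMap.range (symOuterMap ξ), ?_⟩, ?_, ?_⟩
  · ext M
    simp only [SetLike.mem_coe, LinearMap.mem_range, symOuterMap, LinearMap.coe_mk,
      AddHom.coe_mk, Set.mem_setOf_eq]
    exact ⟨fun ⟨b, h⟩ => ⟨b, h.symm⟩, fun ⟨b, h⟩ => ⟨b, h.symm⟩⟩
  · intro b
    rw [frobInner_sub_left, frobInner_a_symOuter a ha, frobInner_symOuter, hξξ, hpb, hpξ,
      sum_mul_comm c b, sum_mul_comm ξ b]
    ring
  · rw [frob2_eq_frobInner, frobInner_symOuter, hξξ, hpξ, sum_mul_comm ξ p, hpξ]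
    have hpp : (∑ i, p i * p i) = 4 * (∑ i, c i * c i) - 3 * s ^ 2 := by
      rw [hpb p, sum_mul_comm c p, hpb c, sum_mul_comm ξ p, hpξ, ← hs]
      ring
    rw [hpp]
    have h2 : (∑ i, c i ^ 2) = ∑ i, c i * c i := Finset.sum_congr rfl fun i _ => sq (c i)
    rw [h2, hcξ]
    ring
end

section
/- Let d ≥ 1 and let a ∈ ℝ^{d×d} be symmetric. (i) If a is positive semidefinite with largest eigenvalue λ₊, then max_{ξ ∈ S^{d−1}} (2‖aξ‖² − ⟨aξ, ξ⟩²) = λ₊², and a unit vector ξ attains this maximum if and only if aξ = λ₊·ξ. (ii) If a is negative semidefinite with smallest eigenvalue λ₋, then max_{ξ ∈ S^{d−1}} (2‖aξ‖² − ⟨aξ, ξ⟩²) = λ₋², and a unit vector ξ attains this maximum if and only if aξ = λ₋·ξ. -/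
/-!
If `0 ≤ a ≤ c` in the Loewner order, conjugating `a ≤ c` by `√a` gives `a² ≤ c a`. Hence, with
`t = ⟨aξ, ξ⟩`, `2‖aξ‖² − t² ≤ 2ct − t² = c² − (c − t)² ≤ c²`, and equality forces `t = c`, i.e.
`⟨(c − a)ξ, ξ⟩ = 0`, which for `c − a ≥ 0` means `aξ = cξ`. Taking for `c` the largest eigenvalue
gives (i); since the quantity is even in `a`, (ii) is (i) for `−a`.
-/

open Matrix
open scoped MatrixOrder

lemma IsLeast.neg {G : Type*} [AddGroup G] [Preorder G] [AddLeftMono G] [AddRightMono G]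
    {s : Set G} {a : G} (h : IsLeast s a) : IsGreatest (-s) (-a) :=
  ⟨Set.neg_mem_neg.2 h.1, fun _ hx => le_neg_of_le_neg (h.2 hx)⟩

namespace Matrix

variable {n : Type*} [Fintype n]

lemma mul_self_le_smul_self [DecidableEq n] {𝕜 : Type*} [RCLike 𝕜] {a : Matrix n n 𝕜} {c : ℝ}
    (ha : 0 ≤ a) (hac : a ≤ algebraMap ℝ _ c) : a * a ≤ c • a := by
  set s := CFC.sqrt a
  have hs : s * s = a := CFC.sqrt_mul_sqrt_self a ha
  have h := IsSelfAdjoint.conjugate_le_conjugate hac (CFC.sqrt_nonneg a).isSelfAdjoint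
  rw [Algebra.algebraMap_eq_smul_one, mul_smul_one, smul_mul_assoc, hs] at h
  calc a * a = s * s * (s * s) := by rw [hs]
    _ = s * (s * s) * s := by simp only [mul_assoc]
    _ ≤ c • a := by rwa [hs]

lemma mem_spectrum_iff_exists_mulVec_eq_smul [DecidableEq n] {K : Type*} [Field K]
    {a : Matrix n n K} {μ : K} : μ ∈ spectrum K a ↔ ∃ v ≠ 0, a *ᵥ v = μ • v := by
  rw [← spectrum_toLin', ← Module.End.hasEigenvalue_iff_mem_spectrum]
  simp only [Module.End.hasEigenvalue_iff, Submodule.ne_bot_iff, Module.End.mem_eigenspace_iff,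
    toLin'_apply]
  exact exists_congr fun v => and_comm

lemma exists_dotProduct_self_eq_one_of_mem_spectrum [DecidableEq n] {a : Matrix n n ℝ} {μ : ℝ}
    (hμ : μ ∈ spectrum ℝ a) : ∃ ξ : n → ℝ, ξ ⬝ᵥ ξ = 1 ∧ a *ᵥ ξ = μ • ξ := by
  obtain ⟨v, hv0, hv⟩ := mem_spectrum_iff_exists_mulVec_eq_smul.1 hμ
  have hpos : 0 < v ⬝ᵥ v := by simpa using dotProduct_star_self_pos_iff.2 hv0
  refine ⟨(√(v ⬝ᵥ v))⁻¹ • v, ?_, by rw [mulVec_smul, hv, smul_comm]⟩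
  rw [smul_dotProduct, dotProduct_smul, smul_smul, smul_eq_mul, ← sq, inv_pow,
    Real.sq_sqrt hpos.le, inv_mul_cancel₀ hpos.ne']

lemma dotProduct_mulVec_le_of_le {a b : Matrix n n ℝ} (h : a ≤ b) (x : n → ℝ) :
    x ⬝ᵥ a *ᵥ x ≤ x ⬝ᵥ b *ᵥ x := by
  have := (le_iff.1 h).dotProduct_mulVec_nonneg x
  rwa [star_trivial, sub_mulVec, dotProduct_sub, sub_nonneg] at this

/-- The compatibility quantifier `g_cc(a)` is the maximum of `ccQuantity a` over the unit sphere. -/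
def ccQuantity (a : Matrix n n ℝ) (ξ : n → ℝ) : ℝ :=
  2 * (a *ᵥ ξ ⬝ᵥ a *ᵥ ξ) - (a *ᵥ ξ ⬝ᵥ ξ) ^ 2

@[simp]
lemma ccQuantity_neg (a : Matrix n n ℝ) (ξ : n → ℝ) : ccQuantity (-a) ξ = ccQuantity a ξ := by
  simp [ccQuantity, neg_mulVec]

lemma ccQuantity_of_mulVec_eq_smul {a : Matrix n n ℝ} {ξ : n → ℝ} {c : ℝ} (hξ : ξ ⬝ᵥ ξ = 1)
    (h : a *ᵥ ξ = c • ξ) : ccQuantity a ξ = c ^ 2 := by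
  simp only [ccQuantity, h, smul_dotProduct, dotProduct_smul, hξ, smul_eq_mul]
  ring

section Bounds

variable [DecidableEq n] {a : Matrix n n ℝ} {c : ℝ} {ξ : n → ℝ}

lemma mulVec_eq_smul_of_mulVec_dotProduct_eq (hac : a ≤ algebraMap ℝ _ c) (hξ : ξ ⬝ᵥ ξ = 1)
    (h : a *ᵥ ξ ⬝ᵥ ξ = c) : a *ᵥ ξ = c • ξ := by
  have hzero : star ξ ⬝ᵥ (algebraMap ℝ _ c - a) *ᵥ ξ = 0 := by
    simp [sub_mulVec, Algebra.algebraMap_eq_smul_one, smul_mulVec, dotProduct_comm ξ, h, hξ]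
  have := (le_iff.1 hac).dotProduct_mulVec_zero_iff ξ |>.1 hzero
  rw [sub_mulVec, sub_eq_zero, Algebra.algebraMap_eq_smul_one, smul_mulVec, one_mulVec] at this
  exact this.symm

lemma mulVec_dotProduct_mulVec_le (ha : 0 ≤ a) (hac : a ≤ algebraMap ℝ _ c) :
    a *ᵥ ξ ⬝ᵥ a *ᵥ ξ ≤ c * (a *ᵥ ξ ⬝ᵥ ξ) := by
  have hsymm : aᵀ = a := by
    simpa [conjTranspose_eq_transpose_of_trivial] using (nonneg_iff_posSemidef.1 ha).1.eq
  have := dotProduct_mulVec_le_of_le (mul_self_le_smul_self ha hac) ξ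
  rwa [← mulVec_mulVec, dotProduct_mulVec, ← mulVec_transpose, hsymm, smul_mulVec,
    dotProduct_smul, smul_eq_mul, dotProduct_comm ξ] at this

lemma ccQuantity_le_sq (ha : 0 ≤ a) (hac : a ≤ algebraMap ℝ _ c) :
    ccQuantity a ξ ≤ c ^ 2 := by
  have := mulVec_dotProduct_mulVec_le (ξ := ξ) ha hac
  unfold ccQuantity
  nlinarith [sq_nonneg (c - a *ᵥ ξ ⬝ᵥ ξ)]

lemma ccQuantity_eq_sq_iff (ha : 0 ≤ a) (hac : a ≤ algebraMap ℝ _ c) (hξ : ξ ⬝ᵥ ξ = 1) :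
    ccQuantity a ξ = c ^ 2 ↔ a *ᵥ ξ = c • ξ := by
  refine ⟨fun h => mulVec_eq_smul_of_mulVec_dotProduct_eq hac hξ ?_,
    ccQuantity_of_mulVec_eq_smul hξ⟩
  have := mulVec_dotProduct_mulVec_le (ξ := ξ) ha hac
  unfold ccQuantity at h
  nlinarith [sq_nonneg (c - a *ᵥ ξ ⬝ᵥ ξ)]

theorem isGreatest_ccQuantity_of_nonneg (ha : 0 ≤ a) (hc : IsGreatest (spectrum ℝ a) c) :
    IsGreatest {g | ∃ ξ : n → ℝ, ξ ⬝ᵥ ξ = 1 ∧ g = ccQuantity a ξ} (c ^ 2) ∧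
      ∀ ξ : n → ℝ, ξ ⬝ᵥ ξ = 1 → (ccQuantity a ξ = c ^ 2 ↔ a *ᵥ ξ = c • ξ) := by
  have hac : a ≤ algebraMap ℝ _ c :=
    (le_algebraMap_iff_spectrum_le (IsSelfAdjoint.of_nonneg ha)).2 fun _ hx => hc.2 hx
  obtain ⟨ξ, hξ, hξc⟩ := exists_dotProduct_self_eq_one_of_mem_spectrum hc.1
  refine ⟨⟨⟨ξ, hξ, (ccQuantity_of_mulVec_eq_smul hξ hξc).symm⟩, ?_⟩,
    fun _ => ccQuantity_eq_sq_iff ha hac⟩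
  rintro _ ⟨ξ, -, rfl⟩
  exact ccQuantity_le_sq ha hac

theorem isGreatest_ccQuantity_of_nonpos (ha : a ≤ 0) (hc : IsLeast (spectrum ℝ a) c) :
    IsGreatest {g | ∃ ξ : n → ℝ, ξ ⬝ᵥ ξ = 1 ∧ g = ccQuantity a ξ} (c ^ 2) ∧
      ∀ ξ : n → ℝ, ξ ⬝ᵥ ξ = 1 → (ccQuantity a ξ = c ^ 2 ↔ a *ᵥ ξ = c • ξ) := by
  have := isGreatest_ccQuantity_of_nonneg (neg_nonneg.2 ha) (spectrum.neg_eq (R := ℝ) a ▸ hc.neg)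
  simpa only [ccQuantity_neg, neg_sq, neg_mulVec, neg_smul, neg_inj] using this

end Bounds

end Matrix

theorem statement12_general (d : ℕ) (a : Matrix (Fin d) (Fin d) ℝ) :
    -- (i) the positive semidefinite case
    (∀ lp : ℝ, a.PosSemidef →
      IsGreatest {μ : ℝ | ∃ v : Fin d → ℝ, v ≠ 0 ∧ a.mulVec v = μ • v} lp →
      (IsGreatest {g : ℝ | ∃ ξ : Fin d → ℝ, (∑ i, ξ i ^ 2) = 1 ∧
          g = 2 * (∑ i, (a.mulVec ξ i) ^ 2) - (∑ i, a.mulVec ξ i * ξ i) ^ 2} (lp ^ 2) ∧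
        ∀ ξ : Fin d → ℝ, (∑ i, ξ i ^ 2) = 1 →
          (2 * (∑ i, (a.mulVec ξ i) ^ 2) - (∑ i, a.mulVec ξ i * ξ i) ^ 2 = lp ^ 2 ↔
            a.mulVec ξ = lp • ξ))) ∧
    -- (ii) the negative semidefinite case
    (∀ lm : ℝ, (-a).PosSemidef →
      IsLeast {μ : ℝ | ∃ v : Fin d → ℝ, v ≠ 0 ∧ a.mulVec v = μ • v} lm →
      (IsGreatest {g : ℝ | ∃ ξ : Fin d → ℝ, (∑ i, ξ i ^ 2) = 1 ∧
          g = 2 * (∑ i, (a.mulVec ξ i) ^ 2) - (∑ i, a.mulVec ξ i * ξ i) ^ 2} (lm ^ 2) ∧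
        ∀ ξ : Fin d → ℝ, (∑ i, ξ i ^ 2) = 1 →
          (2 * (∑ i, (a.mulVec ξ i) ^ 2) - (∑ i, a.mulVec ξ i * ξ i) ^ 2 = lm ^ 2 ↔
            a.mulVec ξ = lm • ξ))) := by
  have hsq (v : Fin d → ℝ) : ∑ i, v i ^ 2 = v ⬝ᵥ v := by simp only [dotProduct, sq]
  have hspec : {μ : ℝ | ∃ v : Fin d → ℝ, v ≠ 0 ∧ a *ᵥ v = μ • v} = spectrum ℝ a :=
    Set.ext fun _ => mem_spectrum_iff_exists_mulVec_eq_smul.symm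
  simp only [hsq, hspec]
  exact ⟨fun _ ha hlp => isGreatest_ccQuantity_of_nonneg (nonneg_iff_posSemidef.2 ha) hlp,
    fun _ ha hlm => isGreatest_ccQuantity_of_nonpos (neg_nonneg.1 (nonneg_iff_posSemidef.2 ha)) hlm⟩

/-- For a symmetric semidefinite matrix `a`, the quantity `2‖aξ‖² - ⟨aξ,ξ⟩²` is maximized
over the unit sphere at the extremal eigenvalue squared, exactly at the corresponding
eigenvectors. -/
theorem statement12 (d : ℕ) (hd : 1 ≤ d) (a : Matrix (Fin d) (Fin d) ℝ) (ha : a.IsSymm) :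
    -- (i) the positive semidefinite case
    (∀ lp : ℝ, a.PosSemidef →
      IsGreatest {μ : ℝ | ∃ v : Fin d → ℝ, v ≠ 0 ∧ a.mulVec v = μ • v} lp →
      (IsGreatest {g : ℝ | ∃ ξ : Fin d → ℝ, (∑ i, ξ i ^ 2) = 1 ∧
          g = 2 * (∑ i, (a.mulVec ξ i) ^ 2) - (∑ i, a.mulVec ξ i * ξ i) ^ 2} (lp ^ 2) ∧
        ∀ ξ : Fin d → ℝ, (∑ i, ξ i ^ 2) = 1 →
          (2 * (∑ i, (a.mulVec ξ i) ^ 2) - (∑ i, a.mulVec ξ i * ξ i) ^ 2 = lp ^ 2 ↔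
            a.mulVec ξ = lp • ξ))) ∧
    -- (ii) the negative semidefinite case
    (∀ lm : ℝ, (-a).PosSemidef →
      IsLeast {μ : ℝ | ∃ v : Fin d → ℝ, v ≠ 0 ∧ a.mulVec v = μ • v} lm →
      (IsGreatest {g : ℝ | ∃ ξ : Fin d → ℝ, (∑ i, ξ i ^ 2) = 1 ∧
          g = 2 * (∑ i, (a.mulVec ξ i) ^ 2) - (∑ i, a.mulVec ξ i * ξ i) ^ 2} (lm ^ 2) ∧
        ∀ ξ : Fin d → ℝ, (∑ i, ξ i ^ 2) = 1 →
          (2 * (∑ i, (a.mulVec ξ i) ^ 2) - (∑ i, a.mulVec ξ i * ξ i) ^ 2 = lm ^ 2 ↔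
            a.mulVec ξ = lm • ξ))) :=
  statement12_general d a
end

section
/- Let d ≥ 2 and let a ∈ ℝ^{d×d} be symmetric. Then the function ξ ↦ 2‖aξ‖² − ⟨aξ, ξ⟩² is constant on the unit sphere S^{d−1} if and only if a = c·I_d for some c ∈ ℝ, where I_d is the identity matrix. -/
section aux

/-- Auxiliary: sum against a two-point supported vector. -/
private lemma sum_two_point {d : ℕ} (i j : Fin d) (hij : i ≠ j) (c e : ℝ) (f : Fin d → ℝ) :
    ∑ k, f k * (c * (if k = i then (1:ℝ) else 0) + e * (if k = j then (1:ℝ) else 0))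
      = c * f i + e * f j := by
  have : ∀ k : Fin d, f k * (c * (if k = i then (1:ℝ) else 0) + e * (if k = j then (1:ℝ) else 0))
      = (if k = i then c * f k else 0) + (if k = j then e * f k else 0) := by
    intro k
    by_cases h1 : k = i
    · by_cases h2 : k = j
      · exact absurd (h1.symm.trans h2) hij
      · simp [h1, h2, hij, Ne.symm hij]; ring
    · by_cases h2 : k = j
      · simp [h1, h2, hij, Ne.symm hij]; ring
      · simp [h1, h2]
  rw [Finset.sum_congr rfl (fun k _ => this k), Finset.sum_add_distrib]
  simp

end aux

/-- For a symmetric matrix `a`, the function `ξ ↦ 2‖aξ‖² - ⟨aξ,ξ⟩²` is constant on the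
unit sphere if and only if `a` is a real multiple of the identity. -/
theorem statement14 (d : ℕ) (hd : 2 ≤ d) (a : Matrix (Fin d) (Fin d) ℝ) (ha : a.IsSymm) :
    (∀ ξ η : Fin d → ℝ, (∑ i, ξ i ^ 2) = 1 → (∑ i, η i ^ 2) = 1 →
        2 * (∑ i, (a.mulVec ξ i) ^ 2) - (∑ i, a.mulVec ξ i * ξ i) ^ 2 =
          2 * (∑ i, (a.mulVec η i) ^ 2) - (∑ i, a.mulVec η i * η i) ^ 2) ↔
      ∃ c : ℝ, a = c • (1 : Matrix (Fin d) (Fin d) ℝ) := by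
  constructor
  · intro h
    -- key step: for i ≠ j we get off-diagonal zero and equal diagonal
    have key : ∀ i j : Fin d, i ≠ j → a i j = 0 ∧ a i i = a j j := by
      intro i j hij
      set Bi := ∑ k, (a k i)^2 with hBi
      set Bij := ∑ k, a k i * a k j with hBij
      set Bj := ∑ k, (a k j)^2 with hBj
      set v : ℝ → ℝ → (Fin d → ℝ) :=
        fun c e k => c * (if k = i then (1:ℝ) else 0) + e * (if k = j then (1:ℝ) else 0) with hv
      have hmul : ∀ (c e : ℝ) (k : Fin d), a.mulVec (v c e) k = c * a k i + e * a k j := by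
        intro c e k
        simp only [Matrix.mulVec, dotProduct, hv]
        exact sum_two_point i j hij c e (fun m => a k m)
      have hnorm : ∀ c e : ℝ, ∑ k, (v c e k)^2 = c^2 + e^2 := by
        intro c e
        have : ∀ k : Fin d, (v c e k)^2 = v c e k * v c e k := fun k => sq (v c e k)
        rw [Finset.sum_congr rfl (fun k _ => this k), sum_two_point i j hij c e (v c e)]
        simp only [hv, if_pos rfl, if_neg hij, if_neg (Ne.symm hij)]
        simp
        ring
      have hQ1 : ∀ c e : ℝ, ∑ k, (a.mulVec (v c e) k)^2
          = c^2 * Bi + 2*(c*e) * Bij + e^2 * Bj := by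
        intro c e
        have : ∀ k : Fin d, (a.mulVec (v c e) k)^2
            = c^2 * (a k i)^2 + 2*(c*e) * (a k i * a k j) + e^2 * (a k j)^2 := by
          intro k; rw [hmul]; ring
        rw [Finset.sum_congr rfl (fun k _ => this k)]
        rw [Finset.sum_add_distrib, Finset.sum_add_distrib, ← Finset.mul_sum, ← Finset.mul_sum,
          ← Finset.mul_sum]
      have hQ2 : ∀ c e : ℝ, ∑ k, a.mulVec (v c e) k * v c e k
          = c * (c * a i i + e * a i j) + e * (c * a i j + e * a j j) := by
        intro c e
        rw [sum_two_point i j hij c e (a.mulVec (v c e)), hmul, hmul]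
        have hsymm : a j i = a i j := by
          conv_lhs => rw [← ha]
          rfl
        rw [hsymm]
      -- apply the constancy hypothesis at five points of the unit circle in span{e_i,e_j}
      have happ : ∀ c e : ℝ, c^2 + e^2 = 1 →
          2 * (c^2 * Bi + 2*(c*e) * Bij + e^2 * Bj)
            - (c * (c * a i i + e * a i j) + e * (c * a i j + e * a j j))^2
          = 2 * Bj - (a j j)^2 := by
        intro c e hce
        have h01 : (0:ℝ)^2 + 1^2 = 1 := by norm_num
        have E := h (v c e) (v 0 1) (by rw [hnorm]; exact hce) (by rw [hnorm]; exact h01)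
        rw [hQ1, hQ2, hQ1, hQ2] at E
        rw [E]; ring
      have E1 := happ 1 0 (by norm_num)
      have E2 := happ (3/5) (4/5) (by norm_num)
      have E3 := happ (-3/5) (4/5) (by norm_num)
      have E4 := happ (4/5) (3/5) (by norm_num)
      have E5 := happ (-4/5) (3/5) (by norm_num)
      have hp3 : 4*Bij - 4*(a i i * a i j) = 0 := by
        linear_combination (-75/56 : ℝ) * E2 + (75/56 : ℝ) * E3
          + (50/21 : ℝ) * E4 + (-50/21 : ℝ) * E5
      have hp1 : 4*Bij - 4*(a j j * a i j) = 0 := by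
        linear_combination (50/21 : ℝ) * E2 + (-50/21 : ℝ) * E3
          + (-75/56 : ℝ) * E4 + (75/56 : ℝ) * E5
      have hp2 : 2*Bi + 2*Bj - 2*(a i i * a j j) - 4*(a i j)^2 - 2*(2*Bj - (a j j)^2) = 0 := by
        linear_combination (-9/16 : ℝ) * E1 + (625/288 : ℝ) * E2 + (625/288 : ℝ) * E3
      have T3 : (a i i - a j j)^2 = 4 * (a i j)^2 := by linear_combination hp2 - E1
      have h0 : a i j * (a i i - a j j) = 0 := by linear_combination (1/4 : ℝ) * hp1 - (1/4 : ℝ) * hp3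
      have hx4 : (a i j)^4 = 0 := by
        linear_combination (1/4 : ℝ) * (a i j * (a i i - a j j)) * h0 - (1/4 : ℝ) * (a i j)^2 * T3
      have hx : a i j = 0 := by
        exact pow_eq_zero_iff (n := 4) (by norm_num) |>.mp hx4
      refine ⟨hx, ?_⟩
      have : (a i i - a j j)^2 = 0 := by rw [T3, hx]; ring
      have := pow_eq_zero_iff (n := 2) (by norm_num) |>.mp this
      linarith [sub_eq_zero.mp this]
    -- conclude a = c • 1
    have i0 : Fin d := ⟨0, by omega⟩
    refine ⟨a i0 i0, ?_⟩
    ext i j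
    rw [Matrix.smul_apply, Matrix.one_apply, smul_eq_mul]
    by_cases hij : i = j
    · subst hij
      rw [if_pos rfl, mul_one]
      by_cases hii : i = i0
      · subst hii; rfl
      · exact ((key i0 i (fun hh => hii hh.symm)).2).symm
    · rw [if_neg hij, mul_zero]
      exact (key i j hij).1
  · rintro ⟨c, rfl⟩
    intro ξ η hξ hη
    have hv : ∀ (w : Fin d → ℝ), (c • (1 : Matrix (Fin d) (Fin d) ℝ)).mulVec w = c • w := by
      intro w
      rw [Matrix.smul_mulVec, Matrix.one_mulVec]
    rw [hv, hv]
    have comp : ∀ (w : Fin d → ℝ), (∑ i, w i ^ 2) = 1 →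
        2 * (∑ i, ((c • w) i) ^ 2) - (∑ i, (c • w) i * w i) ^ 2 = 2 * c^2 - c^2 := by
      intro w hw
      have h1 : ∑ i, ((c • w) i) ^ 2 = c^2 * ∑ i, w i ^ 2 := by
        rw [Finset.mul_sum]
        exact Finset.sum_congr rfl (fun k _ => by simp [Pi.smul_apply, smul_eq_mul]; ring)
      have h2 : ∑ i, (c • w) i * w i = c * ∑ i, w i ^ 2 := by
        rw [Finset.mul_sum]
        exact Finset.sum_congr rfl (fun k _ => by simp [Pi.smul_apply, smul_eq_mul]; ring)
      rw [h1, h2, hw]; ring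
    rw [comp ξ hξ, comp η hη]
end
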